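/- arXiv:2505.21641 — 2 statements merged into one kernel-verified Lean document; each statement's English description precedes it below -/
import Mathlib

section
/- Let f: Z^n → ℝ have ℓ₂-sensitivity Δ₂(f) = sup over neighboring datasets D ∼ D' of |f(D) − f(D')|. Let U ∼ N(0, σ²) with σ ≥ (1/ε)·√(2 ln(1.25/δ))·Δ₂(f), where 0 < ε ≤ 1 and δ ∈ (0,1). Then the mechanism D ↦ f(D) + U is (ε, δ)-differentially private. -/
/-!
The densities of `N(m, v)` and `N(m', v)` differ by the factor `exp L(x)`, where the privacy loss
`L(x) = ((m - m') (x - m') - (m - m')² / 2) / v` is affine in `x`. Hence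
`P_m(S) ≤ e^ε P_{m'}(S) + P_m(L > ε)`, and under `N(m, v)` the event `L > ε` is a one-sided tail
of the centred Gaussian beyond `τ = ε v / Δ - Δ / 2`. Comparing the centred density with the one
shifted to `τ` gives `P(Y > τ) ≤ exp (-τ² / 2v) / 2` for `τ ≥ 0`, and the calibration
`ε² v ≥ 2 log (1.25 / δ) Δ²` makes `τ² / 2v ≥ log (1.25 / δ) - 1/2`, so this is at most `δ`.
If `τ < 0`, the calibration forces `δ > 15/16`, and `P(Y > τ) ≤ 1/2 + |τ| / √(2π v)` suffices.
-/

open MeasureTheory ProbabilityTheory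

/-- Two datasets of size `n` are neighbors if their Hamming distance equals one. -/
def Neighbor {Z : Type*} [DecidableEq Z] {n : ℕ} (D D' : Fin n → Z) : Prop :=
  (Finset.univ.filter fun i => D i ≠ D' i).card = 1

/-- A mechanism `M` satisfies `(ε, δ)`-differential privacy if for all neighboring
datasets `D, D'` and all measurable sets `S`, `P(M D ∈ S) ≤ exp ε * P(M D' ∈ S) + δ`. -/
def IsDP {Z : Type*} [DecidableEq Z] {n : ℕ} {Ω : Type*} [MeasurableSpace Ω]
    (M : (Fin n → Z) → Measure Ω) (ε δ : ℝ) : Prop :=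
  ∀ D D' : Fin n → Z, Neighbor D D' → ∀ S : Set Ω, MeasurableSet S →
    M D S ≤ ENNReal.ofReal (Real.exp ε) * M D' S + ENNReal.ofReal δ

open Real Set
open scoped NNReal ENNReal

lemma one_fifth_le_log_div (δ : ℝ) (hδ0 : 0 < δ) (hδ1 : δ ≤ 1) : 1 / 5 ≤ log (1.25 / δ) := by
  have h := log_le_sub_one_of_pos (show (0 : ℝ) < 1.25⁻¹ by norm_num)
  rw [log_inv] at h
  have : log 1.25 ≤ log (1.25 / δ) := log_le_log (by norm_num) (by rw [le_div_iff₀ hδ0]; linarith)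
  linarith

lemma exp_half_sub_log_div_le {δ : ℝ} (hδ : 0 < δ) : exp (1 / 2 - log (1.25 / δ)) / 2 ≤ δ := by
  have h := log_le_sub_one_of_pos (show (0 : ℝ) < (5 / 2)⁻¹ by norm_num)
  rw [log_inv] at h
  have hexp : exp (1 / 2) ≤ 5 / 2 := by
    rw [← exp_log (show (0 : ℝ) < 5 / 2 by norm_num)]
    exact exp_le_exp.2 (by linarith)
  rw [exp_sub, exp_log (by positivity), div_div_eq_mul_div, div_div, div_le_iff₀ (by norm_num)]
  nlinarith

lemma exp_neg_sq_div_le {ε δ Δ v : ℝ} (hε1 : ε ≤ 1) (hδ : 0 < δ) (hΔ : 0 < Δ) (hv : 0 < v)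
    (hcal : 2 * log (1.25 / δ) * Δ ^ 2 ≤ ε ^ 2 * v) :
    exp (-(ε * v / Δ - Δ / 2) ^ 2 / (2 * v)) / 2 ≤ δ := by
  have hexpand : (ε * v / Δ - Δ / 2) ^ 2 / (2 * v) =
      ε ^ 2 * v / (2 * Δ ^ 2) - ε / 2 + Δ ^ 2 / (8 * v) := by
    field_simp; ring
  have hL : log (1.25 / δ) ≤ ε ^ 2 * v / (2 * Δ ^ 2) := by
    rw [le_div_iff₀ (by positivity)]; linarith
  have : 0 ≤ Δ ^ 2 / (8 * v) := by positivity
  refine le_trans ?_ (exp_half_sub_log_div_le hδ)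
  gcongr
  rw [neg_div, hexpand]
  linarith

lemma fifteen_sixteenths_lt_of_log_div_lt {δ : ℝ} (hδ : 0 < δ) (h : log (1.25 / δ) < 1 / 4) :
    15 / 16 < δ := by
  have h1 : 1.25 / δ < exp (1 / 4) := by
    rwa [← exp_lt_exp, exp_log (by positivity)] at h
  have h2 : 3 / 4 ≤ exp (-(1 / 4)) := by linarith [add_one_le_exp (-(1 / 4 : ℝ))]
  rw [exp_neg] at h2
  have h3 : exp (1 / 4) ≤ 4 / 3 := by
    rw [le_inv_comm₀ (by norm_num) (exp_pos _)] at h2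
    linarith [h2]
  rw [div_lt_iff₀ hδ] at h1
  nlinarith

lemma neg_div_sqrt_add_half_le {ε δ Δ v : ℝ} (hε : 0 < ε) (hε1 : ε ≤ 1) (hδ0 : 0 < δ)
    (hδ1 : δ < 1) (hΔ : 0 < Δ) (hv : 0 < v) (hcal : 2 * log (1.25 / δ) * Δ ^ 2 ≤ ε ^ 2 * v)
    (hτ : ε * v / Δ - Δ / 2 < 0) :
    -(ε * v / Δ - Δ / 2) / √(2 * π * v) + 1 / 2 ≤ δ := by
  have hL5 := one_fifth_le_log_div δ hδ0 hδ1.le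
  have hεv : 2 * (ε * v) < Δ ^ 2 := by
    rw [sub_neg, div_lt_iff₀ hΔ] at hτ; nlinarith
  have hδ : 15 / 16 < δ := fifteen_sixteenths_lt_of_log_div_lt hδ0 (by nlinarith)
  have hsqrt : 8 / 7 * Δ ≤ √(2 * π * v) := by
    have hε2 : ε ^ 2 * v ≤ v := mul_le_of_le_one_left hv.le (by nlinarith)
    have hv' : 2 / 5 * Δ ^ 2 ≤ v := by nlinarith
    rw [le_sqrt (by positivity) (by positivity)]
    nlinarith [pi_gt_three]
  have : -(ε * v / Δ - Δ / 2) / √(2 * π * v) ≤ 7 / 16 := by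
    rw [div_le_iff₀ (by positivity)]
    have : 0 ≤ ε * v / Δ := by positivity
    linarith
  linarith

lemma MeasureTheory.Measure.le_mul_add_of_restrict_compl_le {α : Type*} [MeasurableSpace α]
    {μ ν : Measure α} {B : Set α} {c : ℝ≥0∞} (h : μ.restrict Bᶜ ≤ c • ν) (S : Set α) :
    μ S ≤ c * ν S + μ B :=
  calc μ S ≤ μ (S ∩ Bᶜ) + μ (S \ Bᶜ) := measure_le_inter_add_sdiff μ S Bᶜ
    _ ≤ c * ν S + μ B := by
      gcongr
      · exact (Measure.le_restrict_apply _ _).trans (h S)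
      · intro x hx; simpa using hx.2

namespace ProbabilityTheory

variable {v : ℝ≥0}

noncomputable def gaussianPrivacyLoss (m m' : ℝ) (v : ℝ≥0) (x : ℝ) : ℝ :=
  ((m - m') * (x - m') - (m - m') ^ 2 / 2) / v

lemma gaussianPDFReal_eq_exp_privacyLoss_mul (m m' : ℝ) (v : ℝ≥0) (x : ℝ) :
    gaussianPDFReal m v x = exp (gaussianPrivacyLoss m m' v x) * gaussianPDFReal m' v x := by
  rcases eq_or_ne v 0 with rfl | hv
  · simp
  rw [gaussianPDFReal, gaussianPDFReal, mul_left_comm, ← exp_add, gaussianPrivacyLoss]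
  congr 2
  field_simp
  ring

lemma gaussianPDF_le_of_privacyLoss_le {m m' c x : ℝ}
    (h : gaussianPrivacyLoss m m' v x ≤ c) :
    gaussianPDF m v x ≤ ENNReal.ofReal (exp c) * gaussianPDF m' v x := by
  rw [gaussianPDF, gaussianPDF, ← ENNReal.ofReal_mul (exp_nonneg _),
    gaussianPDFReal_eq_exp_privacyLoss_mul m m']
  gcongr
  exact gaussianPDFReal_nonneg _ _ _

lemma gaussianReal_le_exp_mul_add (hv : v ≠ 0) (ε m m' : ℝ) (S : Set ℝ) :
    gaussianReal m v S ≤ ENNReal.ofReal (exp ε) * gaussianReal m' v S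
      + gaussianReal m v {x | ε < gaussianPrivacyLoss m m' v x} := by
  refine Measure.le_mul_add_of_restrict_compl_le (Measure.le_iff.2 fun s hs => ?_) S
  rw [Measure.restrict_apply hs, Measure.smul_apply, smul_eq_mul, gaussianReal_apply _ hv,
    gaussianReal_apply _ hv]
  calc ∫⁻ x in s ∩ _, gaussianPDF m v x
      ≤ ∫⁻ x in s ∩ _, ENNReal.ofReal (exp ε) * gaussianPDF m' v x :=
        setLIntegral_mono ((measurable_gaussianPDF _ _).const_mul _)
          fun x hx => gaussianPDF_le_of_privacyLoss_le (not_lt.1 hx.2)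
    _ ≤ ENNReal.ofReal (exp ε) * ∫⁻ x in s, gaussianPDF m' v x := by
        rw [lintegral_const_mul _ (measurable_gaussianPDF _ _)]
        gcongr
        exact inter_subset_left

lemma gaussianReal_zero_preimage_neg (s : Set ℝ) :
    gaussianReal 0 v (Neg.neg ⁻¹' s) = gaussianReal 0 v s := by
  calc gaussianReal 0 v (Neg.neg ⁻¹' s) = (gaussianReal 0 v).map Neg.neg s :=
        ((MeasurableEquiv.neg ℝ).map_apply s).symm
    _ = gaussianReal 0 v s := by rw [gaussianReal_map_neg, neg_zero]

lemma gaussianReal_apply_eq_zero_preimage_add (μ : ℝ) (s : Set ℝ) :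
    gaussianReal μ v s = gaussianReal 0 v ((· + μ) ⁻¹' s) :=
  calc gaussianReal μ v s = (gaussianReal 0 v).map (· + μ) s := by
        rw [gaussianReal_map_add_const, zero_add]
    _ = gaussianReal 0 v ((· + μ) ⁻¹' s) := (MeasurableEquiv.addRight μ).map_apply s

lemma gaussianReal_zero_setOf_lt_mul (t c : ℝ) :
    gaussianReal 0 v {y | t < c * y} = gaussianReal 0 v {y | t < |c| * y} := by
  rcases le_or_gt 0 c with hc | hc
  · rw [abs_of_nonneg hc]
  · rw [abs_of_neg hc, ← gaussianReal_zero_preimage_neg]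
    simp

lemma gaussianReal_Ioi_self (hv : v ≠ 0) (μ : ℝ) : gaussianReal μ v (Ioi μ) = 2⁻¹ := by
  have hsymm : gaussianReal 0 v (Iio 0) = gaussianReal 0 v (Ioi 0) := by
    rw [← gaussianReal_zero_preimage_neg]; simp
  have hsum : gaussianReal 0 v (Iio 0) + gaussianReal 0 v (Ioi 0) = 1 := by
    have := nullSingletonClass_gaussianReal (μ := 0) hv
    rw [← measure_union Ioi_disjoint_Iio_same.symm measurableSet_Ioi, Iio_union_Ioi,
      measure_compl (measurableSet_singleton 0) (measure_ne_top _ _)]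
    simp
  have hshift : gaussianReal μ v (Ioi μ) = gaussianReal 0 v (Ioi 0) := by
    rw [gaussianReal_apply_eq_zero_preimage_add]
    congr 1
    ext; simp
  rw [hsymm] at hsum
  rw [hshift]
  exact ENNReal.eq_inv_of_mul_eq_one_left (by rw [mul_two, hsum])

lemma gaussianReal_Ioi_le_exp (hv : v ≠ 0) {τ : ℝ} (hτ : 0 ≤ τ) :
    gaussianReal 0 v (Ioi τ) ≤ ENNReal.ofReal (exp (-τ ^ 2 / (2 * v))) * 2⁻¹ := by
  have hloss : ∀ x ∈ Ioi τ, gaussianPrivacyLoss 0 τ v x ≤ -τ ^ 2 / (2 * v) := by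
    intro x hx
    rw [gaussianPrivacyLoss, div_le_div_iff₀ (by positivity) (by positivity)]
    nlinarith [mul_nonneg hτ (sub_nonneg.2 (le_of_lt hx)), v.2]
  calc gaussianReal 0 v (Ioi τ) = ∫⁻ x in Ioi τ, gaussianPDF 0 v x := gaussianReal_apply _ hv _
    _ ≤ ∫⁻ x in Ioi τ, ENNReal.ofReal (exp (-τ ^ 2 / (2 * v))) * gaussianPDF τ v x :=
        setLIntegral_mono ((measurable_gaussianPDF _ _).const_mul _)
          fun x hx => gaussianPDF_le_of_privacyLoss_le (hloss x hx)
    _ = ENNReal.ofReal (exp (-τ ^ 2 / (2 * v))) * gaussianReal τ v (Ioi τ) := by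
        rw [lintegral_const_mul _ (measurable_gaussianPDF _ _), gaussianReal_apply _ hv]
    _ = ENNReal.ofReal (exp (-τ ^ 2 / (2 * v))) * 2⁻¹ := by rw [gaussianReal_Ioi_self hv]

lemma gaussianPDFReal_le_inv_sqrt (μ : ℝ) (v : ℝ≥0) (x : ℝ) :
    gaussianPDFReal μ v x ≤ (√(2 * π * v))⁻¹ :=
  mul_le_of_le_one_right (by positivity) (exp_le_one_iff.2
    (div_nonpos_of_nonpos_of_nonneg (neg_nonpos.2 (sq_nonneg _)) (by positivity)))

lemma gaussianReal_Ioi_le_ofReal_add_half (hv : v ≠ 0) {τ : ℝ} (hτ : τ ≤ 0) :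
    gaussianReal 0 v (Ioi τ) ≤ ENNReal.ofReal (-τ / √(2 * π * v)) + 2⁻¹ := by
  have hIoc : gaussianReal 0 v (Ioc τ 0) ≤ ENNReal.ofReal (-τ / √(2 * π * v)) :=
    calc gaussianReal 0 v (Ioc τ 0) = ∫⁻ x in Ioc τ 0, gaussianPDF 0 v x :=
          gaussianReal_apply _ hv _
      _ ≤ ∫⁻ _ in Ioc τ 0, ENNReal.ofReal (√(2 * π * v))⁻¹ :=
          setLIntegral_mono measurable_const fun x _ =>
            ENNReal.ofReal_le_ofReal (gaussianPDFReal_le_inv_sqrt 0 v x)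
      _ = ENNReal.ofReal (-τ / √(2 * π * v)) := by
          rw [setLIntegral_const, Real.volume_Ioc, ← ENNReal.ofReal_mul (by positivity)]
          congr 1
          ring
  calc gaussianReal 0 v (Ioi τ) = gaussianReal 0 v (Ioc τ 0 ∪ Ioi 0) := by
        rw [Ioc_union_Ioi_eq_Ioi hτ]
    _ ≤ gaussianReal 0 v (Ioc τ 0) + gaussianReal 0 v (Ioi 0) := measure_union_le _ _
    _ ≤ ENNReal.ofReal (-τ / √(2 * π * v)) + 2⁻¹ := by rw [gaussianReal_Ioi_self hv]; gcongr

lemma gaussianReal_setOf_lt_privacyLoss_le (hv : v ≠ 0) {m m' ε Δ : ℝ} (hε : 0 ≤ ε)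
    (hm : m ≠ m') (hmΔ : |m - m'| ≤ Δ) :
    gaussianReal m v {x | ε < gaussianPrivacyLoss m m' v x} ≤
      gaussianReal 0 v (Ioi (ε * v / Δ - Δ / 2)) := by
  have hvpos : (0 : ℝ) < v := by positivity
  have hc : 0 < |m - m'| := abs_pos.2 (sub_ne_zero.2 hm)
  have hpre : (· + m) ⁻¹' {x | ε < gaussianPrivacyLoss m m' v x} =
      {y | ε * v - (m - m') ^ 2 / 2 < (m - m') * y} := by
    ext y
    simp only [mem_preimage, mem_ofPred_eq, gaussianPrivacyLoss, lt_div_iff₀ hvpos]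
    constructor <;> intro h <;> linarith
  calc gaussianReal m v {x | ε < gaussianPrivacyLoss m m' v x}
      = gaussianReal 0 v {y | ε * v - (m - m') ^ 2 / 2 < |m - m'| * y} := by
        rw [← gaussianReal_zero_setOf_lt_mul, ← hpre, gaussianReal_apply_eq_zero_preimage_add]
    _ ≤ gaussianReal 0 v (Ioi (ε * v / Δ - Δ / 2)) := by
        refine measure_mono fun y hy => ?_
        rw [mem_ofPred_eq] at hy
        have h1 : ε * v / Δ ≤ ε * v / |m - m'| :=
          div_le_div_of_nonneg_left (by positivity) hc hmΔ
        have h2 : ε * v / |m - m'| - |m - m'| / 2 < y := by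
          rw [sub_lt_iff_lt_add, div_lt_iff₀ hc]
          nlinarith [sq_abs (m - m')]
        simp only [mem_Ioi]
        linarith

variable {ε δ Δ : ℝ}

lemma gaussianReal_Ioi_le_ofReal (hε : 0 < ε) (hε1 : ε ≤ 1) (hδ0 : 0 < δ) (hδ1 : δ < 1)
    (hΔ : 0 < Δ) (hv : v ≠ 0) (hcal : 2 * log (1.25 / δ) * Δ ^ 2 ≤ ε ^ 2 * v) :
    gaussianReal 0 v (Ioi (ε * v / Δ - Δ / 2)) ≤ ENNReal.ofReal δ := by
  have hvpos : (0 : ℝ) < v := by positivity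
  have hhalf : (2⁻¹ : ℝ≥0∞) = ENNReal.ofReal (1 / 2) := by
    rw [one_div, ENNReal.ofReal_inv_of_pos two_pos, ENNReal.ofReal_ofNat]
  rcases le_or_gt 0 (ε * v / Δ - Δ / 2) with hτ | hτ
  · refine (gaussianReal_Ioi_le_exp hv hτ).trans ?_
    rw [hhalf, ← ENNReal.ofReal_mul (exp_nonneg _)]
    exact ENNReal.ofReal_le_ofReal (by linarith [exp_neg_sq_div_le hε1 hδ0 hΔ hvpos hcal])
  · refine (gaussianReal_Ioi_le_ofReal_add_half hv hτ.le).trans ?_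
    rw [hhalf, ← ENNReal.ofReal_add (div_nonneg (by linarith) (by positivity)) (by norm_num)]
    exact ENNReal.ofReal_le_ofReal (neg_div_sqrt_add_half_le hε hε1 hδ0 hδ1 hΔ hvpos hcal hτ)

lemma gaussianReal_le_exp_mul_add_ofReal_of_abs_sub_le {m m' : ℝ} (hε : 0 < ε) (hε1 : ε ≤ 1)
    (hδ : δ ∈ Ioo 0 1) (hmΔ : |m - m'| ≤ Δ) (hcal : 2 * log (1.25 / δ) * Δ ^ 2 ≤ ε ^ 2 * v)
    (S : Set ℝ) :
    gaussianReal m v S ≤ ENNReal.ofReal (exp ε) * gaussianReal m' v S + ENNReal.ofReal δ := by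
  obtain ⟨hδ0, hδ1⟩ := hδ
  rcases eq_or_ne m m' with rfl | hm
  · have : 1 ≤ ENNReal.ofReal (exp ε) := by simpa using one_le_exp hε.le
    exact le_add_right (le_mul_of_one_le_left' this)
  have hΔ : 0 < Δ := (abs_pos.2 (sub_ne_zero.2 hm)).trans_le hmΔ
  have hv : v ≠ 0 := by
    rintro rfl
    rw [NNReal.coe_zero, mul_zero] at hcal
    nlinarith [one_fifth_le_log_div δ hδ0 hδ1.le, pow_pos hΔ 2]
  calc gaussianReal m v S
      ≤ ENNReal.ofReal (exp ε) * gaussianReal m' v S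
        + gaussianReal m v {x | ε < gaussianPrivacyLoss m m' v x} :=
        gaussianReal_le_exp_mul_add hv ε m m' S
    _ ≤ ENNReal.ofReal (exp ε) * gaussianReal m' v S + ENNReal.ofReal δ := by
        gcongr
        exact (gaussianReal_setOf_lt_privacyLoss_le hv hε.le hm hmΔ).trans
          (gaussianReal_Ioi_le_ofReal hε hε1 hδ0 hδ1 hΔ hv hcal)

end ProbabilityTheory

/-- Gaussian mechanism: if `f` has ℓ₂-sensitivity at most `Δ` over neighboring datasets and
`σ ≥ (1/ε)·√(2 ln(1.25/δ))·Δ` with `0 < ε ≤ 1`, `δ ∈ (0,1)`, then `D ↦ f(D) + U` with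
`U ∼ N(0, σ²)` is `(ε, δ)`-differentially private. -/
theorem dp_gaussian_mechanism {Z : Type*} [DecidableEq Z] {n : ℕ}
    (f : (Fin n → Z) → ℝ) (ε δ Δ σ : ℝ) (hε : 0 < ε) (hε1 : ε ≤ 1)
    (hδ : δ ∈ Set.Ioo (0 : ℝ) 1)
    (hΔ : ∀ D D' : Fin n → Z, Neighbor D D' → |f D - f D'| ≤ Δ)
    (hσ : σ ≥ (1 / ε) * Real.sqrt (2 * Real.log (1.25 / δ)) * Δ) :
    IsDP (fun D => gaussianReal (f D) ((σ ^ 2).toNNReal)) ε δ := by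
  intro D D' hDD' S _
  have hfΔ := hΔ D D' hDD'
  have hΔ0 : 0 ≤ Δ := (abs_nonneg _).trans hfΔ
  have hL : 0 ≤ log (1.25 / δ) := by linarith [one_fifth_le_log_div δ hδ.1 hδ.2.le]
  have hcal : 2 * log (1.25 / δ) * Δ ^ 2 ≤ ε ^ 2 * ((σ ^ 2).toNNReal : ℝ) := by
    have hsq := pow_le_pow_left₀ (by positivity) hσ 2
    rw [mul_pow, mul_pow, sq_sqrt (by positivity)] at hsq
    rw [Real.coe_toNNReal _ (sq_nonneg σ)]
    field_simp at hsq
    linarith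
  exact gaussianReal_le_exp_mul_add_ofReal_of_abs_sub_le hε hε1 hδ hfΔ hcal S
end

section
/- The AIPW score Γ is Neyman-orthogonal: with notation as in double robustness, the Gateaux derivative of the map (μ, π) ↦ E[Γ(Z; μ, π)] at the true nuisances (μ₀, π₀) in any bounded direction (h_μ, h_π) is zero, i.e., d/dt E[Γ(Z; μ₀ + t·h_μ, π₀ + t·h_π)] |_{t=0} = 0. -/
open MeasureTheory ProbabilityTheory

private lemma bdd_integrable {Ω : Type*} [MeasurableSpace Ω] (μ : Measure Ω)
    [IsFiniteMeasure μ] (f : Ω → ℝ) (B : ℝ) (hf : Measurable f)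
    (hb : ∀ ω, |f ω| ≤ B) : Integrable f μ :=
  (integrable_const B).mono' hf.aestronglyMeasurable (Filter.Eventually.of_forall fun ω => by
    simpa [Real.norm_eq_abs] using hb ω)

private lemma abs_mul_le {a b Ba Bb : ℝ} (ha : |a| ≤ Ba) (hb : |b| ≤ Bb) :
    |a * b| ≤ Ba * Bb := by
  rw [abs_mul]
  exact mul_le_mul ha hb (abs_nonneg _) ((abs_nonneg _).trans ha)

private lemma comap_integral_mul {Ω 𝒳 : Type*} [mΩ : MeasurableSpace Ω] [MeasurableSpace 𝒳]
    (μ : Measure Ω) [IsProbabilityMeasure μ] (X : Ω → 𝒳) (hX : Measurable X)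
    (g p : 𝒳 → ℝ) (hg : Measurable g) (B : ℝ) (hgB : ∀ x, |g x| ≤ B)
    (q : Ω → ℝ) (hq : Integrable q μ)
    (hqp : μ[q | MeasurableSpace.comap X inferInstance] =ᵐ[μ] fun ω => p (X ω)) :
    ∫ ω, g (X ω) * q ω ∂μ = ∫ ω, g (X ω) * p (X ω) ∂μ := by
  set m := MeasurableSpace.comap X inferInstance with hmdef
  have hm : m ≤ mΩ := hX.comap_le
  haveI : SigmaFinite (μ.trim hm) := by infer_instance
  have hgXm : Measurable[m] fun ω => g (X ω) := hg.comp (Measurable.of_comap_le le_rfl)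
  have hmul : μ[(fun ω => g (X ω)) * q | m] =ᵐ[μ] (fun ω => g (X ω)) * μ[q | m] :=
    condExp_stronglyMeasurable_mul_of_bound hm hgXm.stronglyMeasurable hq B
      (Filter.Eventually.of_forall fun ω => by simpa [Real.norm_eq_abs] using hgB (X ω))
  have h2 : (fun ω => g (X ω)) * μ[q | m] =ᵐ[μ] fun ω => g (X ω) * p (X ω) :=
    (Filter.EventuallyEq.refl _ (fun ω => g (X ω))).mul hqp
  calc ∫ ω, g (X ω) * q ω ∂μ = ∫ ω, ((fun ω => g (X ω)) * q) ω ∂μ := rfl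
    _ = ∫ ω, (μ[(fun ω => g (X ω)) * q | m]) ω ∂μ := (integral_condExp hm).symm
    _ = ∫ ω, g (X ω) * p (X ω) ∂μ := integral_congr_ae (hmul.trans h2)

set_option maxHeartbeats 2000000 in
/-- Neyman orthogonality of the AIPW score: the Gateaux derivative of
`(μ, π) ↦ E[Γ(Z; μ, π)]` at the true nuisances `(μ₀, π₀)` in any bounded direction
`(h_μ, h_π)` (with `π₀ + t·h_π` remaining in `(0,1)` for small `t`) is zero. -/
theorem aipw_neyman_orthogonal {Ω 𝒳 : Type*} [MeasurableSpace Ω]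
    [MeasurableSpace 𝒳] (μ : Measure Ω) [IsProbabilityMeasure μ]
    (X : Ω → 𝒳) (A Y : Ω → ℝ)
    (hX : Measurable X) (hA : Measurable A) (hY : Measurable Y)
    (hAbin : ∀ ω, A ω = 0 ∨ A ω = 1)
    (C : ℝ) (hYbound : ∀ ω, |Y ω| ≤ C)
    -- true nuisances, with propensity bounded away from 0 and 1
    (π0 m1 m0 : 𝒳 → ℝ) (hπ0meas : Measurable π0) (hm1meas : Measurable m1)
    (hm0meas : Measurable m0)
    (c : ℝ) (hc : 0 < c) (hπ0c : ∀ x, c < π0 x ∧ π0 x < 1 - c)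
    (hm1bound : ∀ x, |m1 x| ≤ C) (hm0bound : ∀ x, |m0 x| ≤ C)
    (hπ0 : μ[A | MeasurableSpace.comap X inferInstance] =ᵐ[μ] fun ω => π0 (X ω))
    (hμ1 : μ[fun ω => A ω * Y ω | MeasurableSpace.comap X inferInstance] =ᵐ[μ]
      fun ω => m1 (X ω) * π0 (X ω))
    (hμ0 : μ[fun ω => (1 - A ω) * Y ω | MeasurableSpace.comap X inferInstance] =ᵐ[μ]
      fun ω => m0 (X ω) * (1 - π0 (X ω)))
    -- bounded perturbation directions
    (h1 h0 hπd : 𝒳 → ℝ) (hh1meas : Measurable h1) (hh0meas : Measurable h0)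
    (hhπmeas : Measurable hπd)
    (M : ℝ) (hh1b : ∀ x, |h1 x| ≤ M) (hh0b : ∀ x, |h0 x| ≤ M) (hhπb : ∀ x, |hπd x| ≤ M)
    -- the perturbed propensity stays in (0,1) for small t
    (hsmall : ∃ t₀ > (0 : ℝ), ∀ t : ℝ, |t| < t₀ → ∀ x,
      0 < π0 x + t * hπd x ∧ π0 x + t * hπd x < 1) :
    HasDerivAt
      (fun t : ℝ => ∫ ω,
        ((m1 (X ω) + t * h1 (X ω)) - (m0 (X ω) + t * h0 (X ω)) +
          A ω * (Y ω - (m1 (X ω) + t * h1 (X ω))) / (π0 (X ω) + t * hπd (X ω)) -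
          (1 - A ω) * (Y ω - (m0 (X ω) + t * h0 (X ω))) /
            (1 - (π0 (X ω) + t * hπd (X ω)))) ∂μ)
      0 0 := by
  -- nonemptiness, to get `0 ≤ M` and `0 ≤ C`
  have hΩ : Nonempty Ω := by
    by_contra h
    rw [not_nonempty_iff] at h
    have h1 : (μ Set.univ) = 1 := measure_univ
    rw [Set.univ_eq_empty_iff.mpr h, measure_empty] at h1
    exact zero_ne_one h1
  obtain ⟨ω₀⟩ := hΩ
  have hM0 : (0 : ℝ) ≤ M := (abs_nonneg _).trans (hh1b (X ω₀))
  have hC0 : (0 : ℝ) ≤ C := (abs_nonneg _).trans (hYbound ω₀)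
  set δ : ℝ := c / (2 * (M + 1)) with hδdef
  have hδ : 0 < δ := div_pos hc (by nlinarith)
  have hδM : δ * M ≤ c / 2 := by
    rw [hδdef, div_mul_eq_mul_div, div_le_div_iff₀ (by nlinarith) (by norm_num)]
    nlinarith
  set K : ℝ := M * (2 * M / c + 2 * M / c) with hKdef
  have hK0 : 0 ≤ K := by
    have : 0 ≤ 2 * M / c := by positivity
    rw [hKdef]; positivity
  have hAabs : ∀ ω, |A ω| ≤ 1 := fun ω => by rcases hAbin ω with h | h <;> simp [h]
  have h1Aabs : ∀ ω, |1 - A ω| ≤ 1 := fun ω => by rcases hAbin ω with h | h <;> simp [h]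
  have hπabs : ∀ x, |π0 x| ≤ 1 := fun x =>
    abs_le.mpr ⟨by nlinarith [(hπ0c x).1], by nlinarith [(hπ0c x).2]⟩
  have hdivb : ∀ (a d B : ℝ), |a| ≤ B → c / 2 ≤ d → |a / d| ≤ 2 * B / c := by
    intro a d B hB hd
    have hdpos : 0 < d := lt_of_lt_of_le (half_pos hc) hd
    have hB0 : 0 ≤ B := (abs_nonneg a).trans hB
    rw [abs_div, abs_of_pos hdpos, div_le_div_iff₀ hdpos hc]
    nlinarith [mul_le_mul_of_nonneg_right hB hc.le, mul_le_mul_of_nonneg_left hd hB0]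
  set I0 : ℝ := ∫ ω, (m1 (X ω) - m0 (X ω)) ∂μ with hI0def
  have key : ∀ t : ℝ, |t| ≤ δ → ∃ r : ℝ, |r| ≤ K ∧
      (∫ ω,
        ((m1 (X ω) + t * h1 (X ω)) - (m0 (X ω) + t * h0 (X ω)) +
          A ω * (Y ω - (m1 (X ω) + t * h1 (X ω))) / (π0 (X ω) + t * hπd (X ω)) -
          (1 - A ω) * (Y ω - (m0 (X ω) + t * h0 (X ω))) /
            (1 - (π0 (X ω) + t * hπd (X ω)))) ∂μ) = I0 + t ^ 2 * r := by
    intro t ht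
    have htM : ∀ x, |t * hπd x| ≤ c / 2 := by
      intro x
      rw [abs_mul]
      calc |t| * |hπd x| ≤ δ * M :=
            mul_le_mul ht (hhπb x) (abs_nonneg _) hδ.le
        _ ≤ c / 2 := hδM
    have hden1 : ∀ x, c / 2 ≤ π0 x + t * hπd x := by
      intro x
      have h1' := (hπ0c x).1
      have h2' := neg_abs_le (t * hπd x)
      have h3' := htM x
      linarith
    have hden0 : ∀ x, c / 2 ≤ 1 - (π0 x + t * hπd x) := by
      intro x
      have h1' := (hπ0c x).2
      have h2' := le_abs_self (t * hπd x)
      have h3' := htM x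
      linarith
    have hpos1 : ∀ x, 0 < π0 x + t * hπd x := fun x =>
      lt_of_lt_of_le (half_pos hc) (hden1 x)
    have hpos0 : ∀ x, 0 < 1 - (π0 x + t * hπd x) := fun x =>
      lt_of_lt_of_le (half_pos hc) (hden0 x)
    have hne1 : ∀ x, π0 x + t * hπd x ≠ 0 := fun x => (hpos1 x).ne'
    have hne0 : ∀ x, 1 - (π0 x + t * hπd x) ≠ 0 := fun x => (hpos0 x).ne'
    -- bound on perturbed outcome regressions
    have htMh : ∀ (h : 𝒳 → ℝ), (∀ x, |h x| ≤ M) → ∀ (g : 𝒳 → ℝ), (∀ x, |g x| ≤ C) →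
        ∀ x, |g x + t * h x| ≤ C + δ * M := by
      intro h hhb g hgb x
      calc |g x + t * h x| ≤ |g x| + |t * h x| := abs_add_le _ _
        _ ≤ C + δ * M := by
            have : |t * h x| ≤ δ * M := by
              rw [abs_mul]; exact mul_le_mul ht (hhb x) (abs_nonneg _) hδ.le
            linarith [hgb x]
    have hm1t := htMh h1 hh1b m1 hm1bound
    have hm0t := htMh h0 hh0b m0 hm0bound
    -- the remainder integrand bound
    have hψb : ∀ x, |hπd x * (h1 x / (π0 x + t * hπd x) +
        h0 x / (1 - (π0 x + t * hπd x)))| ≤ K := by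
      intro x
      rw [hKdef]
      refine abs_mul_le (hhπb x) ?_
      calc |h1 x / (π0 x + t * hπd x) + h0 x / (1 - (π0 x + t * hπd x))|
          ≤ |h1 x / (π0 x + t * hπd x)| + |h0 x / (1 - (π0 x + t * hπd x))| := abs_add_le _ _
        _ ≤ 2 * M / c + 2 * M / c :=
            add_le_add (hdivb _ _ _ (hh1b x) (hden1 x)) (hdivb _ _ _ (hh0b x) (hden0 x))
    refine ⟨∫ ω, hπd (X ω) * (h1 (X ω) / (π0 (X ω) + t * hπd (X ω)) +
        h0 (X ω) / (1 - (π0 (X ω) + t * hπd (X ω)))) ∂μ, ?_, ?_⟩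
    · have hb := norm_integral_le_of_norm_le_const (μ := μ)
        (f := fun ω => hπd (X ω) * (h1 (X ω) / (π0 (X ω) + t * hπd (X ω)) +
          h0 (X ω) / (1 - (π0 (X ω) + t * hπd (X ω))))) (C := K)
        (Filter.Eventually.of_forall fun ω => by
          rw [Real.norm_eq_abs]; exact hψb (X ω))
      simpa [Real.norm_eq_abs, measure_univ] using hb
    · -- the main computation
      -- integrability of all the pieces
      have iP1 : Integrable (fun ω =>
          (m1 (X ω) + t * h1 (X ω)) - (m0 (X ω) + t * h0 (X ω))) μ := by
        refine bdd_integrable μ _ (2 * (C + δ * M)) (by fun_prop) fun ω => ?_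
        calc |(m1 (X ω) + t * h1 (X ω)) - (m0 (X ω) + t * h0 (X ω))|
            ≤ |m1 (X ω) + t * h1 (X ω)| + |m0 (X ω) + t * h0 (X ω)| := abs_sub _ _
          _ ≤ 2 * (C + δ * M) := by linarith [hm1t (X ω), hm0t (X ω)]
      have iP2 : Integrable (fun ω =>
          1 / (π0 (X ω) + t * hπd (X ω)) * (A ω * Y ω)) μ := by
        refine bdd_integrable μ _ (2 * 1 / c * (1 * C)) (by fun_prop) fun ω => ?_
        exact abs_mul_le (hdivb _ _ _ (by norm_num) (hden1 (X ω)))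
          (abs_mul_le (hAabs ω) (hYbound ω))
      have iP3 : Integrable (fun ω =>
          (m1 (X ω) + t * h1 (X ω)) / (π0 (X ω) + t * hπd (X ω)) * A ω) μ := by
        refine bdd_integrable μ _ (2 * (C + δ * M) / c * 1) (by fun_prop) fun ω => ?_
        exact abs_mul_le (hdivb _ _ _ (hm1t (X ω)) (hden1 (X ω))) (hAabs ω)
      have iP4 : Integrable (fun ω =>
          1 / (1 - (π0 (X ω) + t * hπd (X ω))) * ((1 - A ω) * Y ω)) μ := by
        refine bdd_integrable μ _ (2 * 1 / c * (1 * C)) (by fun_prop) fun ω => ?_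
        exact abs_mul_le (hdivb _ _ _ (by norm_num) (hden0 (X ω)))
          (abs_mul_le (h1Aabs ω) (hYbound ω))
      have iP5 : Integrable (fun ω =>
          (m0 (X ω) + t * h0 (X ω)) / (1 - (π0 (X ω) + t * hπd (X ω)))) μ := by
        refine bdd_integrable μ _ (2 * (C + δ * M) / c) (by fun_prop) fun ω => ?_
        exact hdivb _ _ _ (hm0t (X ω)) (hden0 (X ω))
      have iP6 : Integrable (fun ω =>
          (m0 (X ω) + t * h0 (X ω)) / (1 - (π0 (X ω) + t * hπd (X ω))) * A ω) μ := by
        refine bdd_integrable μ _ (2 * (C + δ * M) / c * 1) (by fun_prop) fun ω => ?_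
        exact abs_mul_le (hdivb _ _ _ (hm0t (X ω)) (hden0 (X ω))) (hAabs ω)
      have iP2' : Integrable (fun ω =>
          1 / (π0 (X ω) + t * hπd (X ω)) * (m1 (X ω) * π0 (X ω))) μ := by
        refine bdd_integrable μ _ (2 * 1 / c * (C * 1)) (by fun_prop) fun ω => ?_
        exact abs_mul_le (hdivb _ _ _ (by norm_num) (hden1 (X ω)))
          (abs_mul_le (hm1bound (X ω)) (hπabs (X ω)))
      have iP3' : Integrable (fun ω =>
          (m1 (X ω) + t * h1 (X ω)) / (π0 (X ω) + t * hπd (X ω)) * π0 (X ω)) μ := by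
        refine bdd_integrable μ _ (2 * (C + δ * M) / c * 1) (by fun_prop) fun ω => ?_
        exact abs_mul_le (hdivb _ _ _ (hm1t (X ω)) (hden1 (X ω))) (hπabs (X ω))
      have iP4' : Integrable (fun ω =>
          1 / (1 - (π0 (X ω) + t * hπd (X ω))) * (m0 (X ω) * (1 - π0 (X ω)))) μ := by
        refine bdd_integrable μ _ (2 * 1 / c * (C * 1)) (by fun_prop) fun ω => ?_
        refine abs_mul_le (hdivb _ _ _ (by norm_num) (hden0 (X ω)))
          (abs_mul_le (hm0bound (X ω)) ?_)
        have h1' := (hπ0c (X ω)).1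
        have h2' := (hπ0c (X ω)).2
        exact abs_le.mpr ⟨by nlinarith, by nlinarith⟩
      have iP6' : Integrable (fun ω =>
          (m0 (X ω) + t * h0 (X ω)) / (1 - (π0 (X ω) + t * hπd (X ω))) * π0 (X ω)) μ := by
        refine bdd_integrable μ _ (2 * (C + δ * M) / c * 1) (by fun_prop) fun ω => ?_
        exact abs_mul_le (hdivb _ _ _ (hm0t (X ω)) (hden0 (X ω))) (hπabs (X ω))
      have iQ0 : Integrable (fun ω => m1 (X ω) - m0 (X ω)) μ := by
        refine bdd_integrable μ _ (2 * C) (by fun_prop) fun ω => ?_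
        calc |m1 (X ω) - m0 (X ω)| ≤ |m1 (X ω)| + |m0 (X ω)| := abs_sub _ _
          _ ≤ 2 * C := by linarith [hm1bound (X ω), hm0bound (X ω)]
      have iψ : Integrable (fun ω => hπd (X ω) * (h1 (X ω) / (π0 (X ω) + t * hπd (X ω)) +
          h0 (X ω) / (1 - (π0 (X ω) + t * hπd (X ω))))) μ :=
        bdd_integrable μ _ K (by fun_prop) fun ω => hψb (X ω)
      -- integrability of auxiliary combined pieces
      have iAY : Integrable (fun ω => A ω * Y ω) μ :=
        bdd_integrable μ _ (1 * C) (by fun_prop) fun ω => abs_mul_le (hAabs ω) (hYbound ω)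
      have iA : Integrable A μ := bdd_integrable μ _ 1 hA hAabs
      have i1AY : Integrable (fun ω => (1 - A ω) * Y ω) μ :=
        bdd_integrable μ _ (1 * C) (by fun_prop) fun ω => abs_mul_le (h1Aabs ω) (hYbound ω)
      have j1 : Integrable (fun ω =>
          (m1 (X ω) + t * h1 (X ω)) - (m0 (X ω) + t * h0 (X ω)) +
          1 / (π0 (X ω) + t * hπd (X ω)) * (A ω * Y ω)) μ := iP1.add iP2
      have j2 : Integrable (fun ω =>
          (m1 (X ω) + t * h1 (X ω)) - (m0 (X ω) + t * h0 (X ω)) +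
          1 / (π0 (X ω) + t * hπd (X ω)) * (A ω * Y ω) -
          (m1 (X ω) + t * h1 (X ω)) / (π0 (X ω) + t * hπd (X ω)) * A ω) μ := j1.sub iP3
      have j3 : Integrable (fun ω =>
          (m1 (X ω) + t * h1 (X ω)) - (m0 (X ω) + t * h0 (X ω)) +
          1 / (π0 (X ω) + t * hπd (X ω)) * (A ω * Y ω) -
          (m1 (X ω) + t * h1 (X ω)) / (π0 (X ω) + t * hπd (X ω)) * A ω -
          1 / (1 - (π0 (X ω) + t * hπd (X ω))) * ((1 - A ω) * Y ω)) μ := j2.sub iP4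
      have j4 : Integrable (fun ω =>
          (m1 (X ω) + t * h1 (X ω)) - (m0 (X ω) + t * h0 (X ω)) +
          1 / (π0 (X ω) + t * hπd (X ω)) * (A ω * Y ω) -
          (m1 (X ω) + t * h1 (X ω)) / (π0 (X ω) + t * hπd (X ω)) * A ω -
          1 / (1 - (π0 (X ω) + t * hπd (X ω))) * ((1 - A ω) * Y ω) +
          (m0 (X ω) + t * h0 (X ω)) / (1 - (π0 (X ω) + t * hπd (X ω)))) μ := j3.add iP5
      have k1 : Integrable (fun ω =>
          (m1 (X ω) + t * h1 (X ω)) - (m0 (X ω) + t * h0 (X ω)) +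
          1 / (π0 (X ω) + t * hπd (X ω)) * (m1 (X ω) * π0 (X ω))) μ := iP1.add iP2'
      have k2 : Integrable (fun ω =>
          (m1 (X ω) + t * h1 (X ω)) - (m0 (X ω) + t * h0 (X ω)) +
          1 / (π0 (X ω) + t * hπd (X ω)) * (m1 (X ω) * π0 (X ω)) -
          (m1 (X ω) + t * h1 (X ω)) / (π0 (X ω) + t * hπd (X ω)) * π0 (X ω)) μ := k1.sub iP3'
      have k3 : Integrable (fun ω =>
          (m1 (X ω) + t * h1 (X ω)) - (m0 (X ω) + t * h0 (X ω)) +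
          1 / (π0 (X ω) + t * hπd (X ω)) * (m1 (X ω) * π0 (X ω)) -
          (m1 (X ω) + t * h1 (X ω)) / (π0 (X ω) + t * hπd (X ω)) * π0 (X ω) -
          1 / (1 - (π0 (X ω) + t * hπd (X ω))) * (m0 (X ω) * (1 - π0 (X ω)))) μ := k2.sub iP4'
      have k4 : Integrable (fun ω =>
          (m1 (X ω) + t * h1 (X ω)) - (m0 (X ω) + t * h0 (X ω)) +
          1 / (π0 (X ω) + t * hπd (X ω)) * (m1 (X ω) * π0 (X ω)) -
          (m1 (X ω) + t * h1 (X ω)) / (π0 (X ω) + t * hπd (X ω)) * π0 (X ω) -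
          1 / (1 - (π0 (X ω) + t * hπd (X ω))) * (m0 (X ω) * (1 - π0 (X ω))) +
          (m0 (X ω) + t * h0 (X ω)) / (1 - (π0 (X ω) + t * hπd (X ω)))) μ := k3.add iP5
      have recomb : (∫ ω, ((m1 (X ω) + t * h1 (X ω)) - (m0 (X ω) + t * h0 (X ω)) +
            1 / (π0 (X ω) + t * hπd (X ω)) * (m1 (X ω) * π0 (X ω)) -
            (m1 (X ω) + t * h1 (X ω)) / (π0 (X ω) + t * hπd (X ω)) * π0 (X ω) -
            1 / (1 - (π0 (X ω) + t * hπd (X ω))) * (m0 (X ω) * (1 - π0 (X ω))) +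
            (m0 (X ω) + t * h0 (X ω)) / (1 - (π0 (X ω) + t * hπd (X ω))) -
            (m0 (X ω) + t * h0 (X ω)) / (1 - (π0 (X ω) + t * hπd (X ω))) * π0 (X ω)) ∂μ)
          = (∫ ω, ((m1 (X ω) + t * h1 (X ω)) - (m0 (X ω) + t * h0 (X ω))) ∂μ) +
            (∫ ω, 1 / (π0 (X ω) + t * hπd (X ω)) * (m1 (X ω) * π0 (X ω)) ∂μ) -
            (∫ ω, (m1 (X ω) + t * h1 (X ω)) / (π0 (X ω) + t * hπd (X ω)) * π0 (X ω) ∂μ) -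
            (∫ ω, 1 / (1 - (π0 (X ω) + t * hπd (X ω))) * (m0 (X ω) * (1 - π0 (X ω))) ∂μ) +
            (∫ ω, (m0 (X ω) + t * h0 (X ω)) / (1 - (π0 (X ω) + t * hπd (X ω))) ∂μ) -
            (∫ ω, (m0 (X ω) + t * h0 (X ω)) / (1 - (π0 (X ω) + t * hπd (X ω))) * π0 (X ω) ∂μ) := by
        rw [integral_sub k4 iP6', integral_add k3 iP5, integral_sub k2 iP4',
          integral_sub k1 iP3', integral_add iP1 iP2']
      calc
        (∫ ω,
            ((m1 (X ω) + t * h1 (X ω)) - (m0 (X ω) + t * h0 (X ω)) +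
              A ω * (Y ω - (m1 (X ω) + t * h1 (X ω))) / (π0 (X ω) + t * hπd (X ω)) -
              (1 - A ω) * (Y ω - (m0 (X ω) + t * h0 (X ω))) /
                (1 - (π0 (X ω) + t * hπd (X ω)))) ∂μ)
          = ∫ ω, (((m1 (X ω) + t * h1 (X ω)) - (m0 (X ω) + t * h0 (X ω)) +
              1 / (π0 (X ω) + t * hπd (X ω)) * (A ω * Y ω) -
              (m1 (X ω) + t * h1 (X ω)) / (π0 (X ω) + t * hπd (X ω)) * A ω -
              1 / (1 - (π0 (X ω) + t * hπd (X ω))) * ((1 - A ω) * Y ω) +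
              (m0 (X ω) + t * h0 (X ω)) / (1 - (π0 (X ω) + t * hπd (X ω))) -
              (m0 (X ω) + t * h0 (X ω)) / (1 - (π0 (X ω) + t * hπd (X ω))) * A ω)) ∂μ := by
            refine integral_congr_ae (Filter.Eventually.of_forall fun ω => ?_)
            have h1' := hne1 (X ω)
            have h0' := hne0 (X ω)
            field_simp
            ring
        _ = (∫ ω, ((m1 (X ω) + t * h1 (X ω)) - (m0 (X ω) + t * h0 (X ω))) ∂μ) +
            (∫ ω, 1 / (π0 (X ω) + t * hπd (X ω)) * (A ω * Y ω) ∂μ) -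
            (∫ ω, (m1 (X ω) + t * h1 (X ω)) / (π0 (X ω) + t * hπd (X ω)) * A ω ∂μ) -
            (∫ ω, 1 / (1 - (π0 (X ω) + t * hπd (X ω))) * ((1 - A ω) * Y ω) ∂μ) +
            (∫ ω, (m0 (X ω) + t * h0 (X ω)) / (1 - (π0 (X ω) + t * hπd (X ω))) ∂μ) -
            (∫ ω, (m0 (X ω) + t * h0 (X ω)) / (1 - (π0 (X ω) + t * hπd (X ω))) * A ω ∂μ) := by
            rw [integral_sub j4 iP6, integral_add j3 iP5, integral_sub j2 iP4,
              integral_sub j1 iP3, integral_add iP1 iP2]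
        _ = (∫ ω, ((m1 (X ω) + t * h1 (X ω)) - (m0 (X ω) + t * h0 (X ω))) ∂μ) +
            (∫ ω, 1 / (π0 (X ω) + t * hπd (X ω)) * (m1 (X ω) * π0 (X ω)) ∂μ) -
            (∫ ω, (m1 (X ω) + t * h1 (X ω)) / (π0 (X ω) + t * hπd (X ω)) * π0 (X ω) ∂μ) -
            (∫ ω, 1 / (1 - (π0 (X ω) + t * hπd (X ω))) * (m0 (X ω) * (1 - π0 (X ω))) ∂μ) +
            (∫ ω, (m0 (X ω) + t * h0 (X ω)) / (1 - (π0 (X ω) + t * hπd (X ω))) ∂μ) -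
            (∫ ω, (m0 (X ω) + t * h0 (X ω)) / (1 - (π0 (X ω) + t * hπd (X ω))) * π0 (X ω) ∂μ) := by
            have e2 := comap_integral_mul μ X hX
              (fun x => 1 / (π0 x + t * hπd x)) (fun x => m1 x * π0 x)
              (by fun_prop) (2 * 1 / c)
              (fun x => hdivb _ _ _ (by norm_num) (hden1 x))
              (fun ω => A ω * Y ω) iAY hμ1
            have e3 := comap_integral_mul μ X hX
              (fun x => (m1 x + t * h1 x) / (π0 x + t * hπd x)) π0
              (by fun_prop) (2 * (C + δ * M) / c)
              (fun x => hdivb _ _ _ (hm1t x) (hden1 x)) A iA hπ0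
            have e4 := comap_integral_mul μ X hX
              (fun x => 1 / (1 - (π0 x + t * hπd x))) (fun x => m0 x * (1 - π0 x))
              (by fun_prop) (2 * 1 / c)
              (fun x => hdivb _ _ _ (by norm_num) (hden0 x))
              (fun ω => (1 - A ω) * Y ω) i1AY hμ0
            have e6 := comap_integral_mul μ X hX
              (fun x => (m0 x + t * h0 x) / (1 - (π0 x + t * hπd x))) π0
              (by fun_prop) (2 * (C + δ * M) / c)
              (fun x => hdivb _ _ _ (hm0t x) (hden0 x)) A iA hπ0
            rw [e2, e3, e4, e6]
        _ = (∫ ω, ((m1 (X ω) + t * h1 (X ω)) - (m0 (X ω) + t * h0 (X ω)) +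
              1 / (π0 (X ω) + t * hπd (X ω)) * (m1 (X ω) * π0 (X ω)) -
              (m1 (X ω) + t * h1 (X ω)) / (π0 (X ω) + t * hπd (X ω)) * π0 (X ω) -
              1 / (1 - (π0 (X ω) + t * hπd (X ω))) * (m0 (X ω) * (1 - π0 (X ω))) +
              (m0 (X ω) + t * h0 (X ω)) / (1 - (π0 (X ω) + t * hπd (X ω))) -
              (m0 (X ω) + t * h0 (X ω)) / (1 - (π0 (X ω) + t * hπd (X ω))) * π0 (X ω)) ∂μ) :=
            recomb.symm
        _ = ∫ ω, ((m1 (X ω) - m0 (X ω)) +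
              t ^ 2 * (hπd (X ω) * (h1 (X ω) / (π0 (X ω) + t * hπd (X ω)) +
                h0 (X ω) / (1 - (π0 (X ω) + t * hπd (X ω)))))) ∂μ := by
            refine integral_congr_ae (Filter.Eventually.of_forall fun ω => ?_)
            have h1' := hne1 (X ω)
            have h0' := hne0 (X ω)
            field_simp
            ring
        _ = I0 + t ^ 2 * (∫ ω, hπd (X ω) * (h1 (X ω) / (π0 (X ω) + t * hπd (X ω)) +
              h0 (X ω) / (1 - (π0 (X ω) + t * hπd (X ω)))) ∂μ) := by
            rw [integral_add iQ0 (iψ.const_mul (t ^ 2)), integral_const_mul, hI0def]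
  -- conclude via little-o
  have hF0 : (∫ ω,
      ((m1 (X ω) + (0:ℝ) * h1 (X ω)) - (m0 (X ω) + (0:ℝ) * h0 (X ω)) +
        A ω * (Y ω - (m1 (X ω) + (0:ℝ) * h1 (X ω))) / (π0 (X ω) + (0:ℝ) * hπd (X ω)) -
        (1 - A ω) * (Y ω - (m0 (X ω) + (0:ℝ) * h0 (X ω))) /
          (1 - (π0 (X ω) + (0:ℝ) * hπd (X ω)))) ∂μ) = I0 := by
    obtain ⟨r0, _, h0eq⟩ := key 0 (by simp [hδ.le])
    rw [h0eq]; ring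
  rw [hasDerivAt_iff_isLittleO]
  simp only [sub_zero, smul_zero]
  rw [Asymptotics.isLittleO_iff]
  intro ε hε
  have hK1 : (0 : ℝ) < K + 1 := by linarith
  rw [Metric.eventually_nhds_iff]
  refine ⟨min δ (ε / (K + 1)), lt_min hδ (div_pos hε hK1), fun {t} htd => ?_⟩
  rw [Real.dist_eq, sub_zero] at htd
  have ht1 : |t| ≤ δ := le_of_lt (lt_of_lt_of_le htd (min_le_left _ _))
  have ht2 : |t| < ε / (K + 1) := lt_of_lt_of_le htd (min_le_right _ _)
  obtain ⟨r, hrK, hFt⟩ := key t ht1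
  rw [hFt, hF0]
  have habs : |I0 + t ^ 2 * r - I0| = t ^ 2 * |r| := by
    rw [show I0 + t ^ 2 * r - I0 = t ^ 2 * r by ring, abs_mul, abs_of_nonneg (sq_nonneg t)]
  rw [Real.norm_eq_abs, Real.norm_eq_abs, habs]
  have ht2' : |t| * (K + 1) < ε := (lt_div_iff₀ hK1).mp ht2
  have hsq : t ^ 2 = |t| * |t| := by rw [← abs_mul, ← sq, abs_of_nonneg (sq_nonneg t)]
  rw [hsq]
  have hr0 : 0 ≤ |r| := abs_nonneg r
  nlinarith [abs_nonneg t, mul_le_mul_of_nonneg_left hrK (abs_nonneg t),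
    mul_le_mul_of_nonneg_left (le_of_lt ht2') (abs_nonneg t)]
end
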